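/- arXiv:1808.05923 — 3 statements merged into one kernel-verified Lean document; each statement's English description precedes it below -/
import Mathlib

section
/- Let l ≥ 2, m1, m2 ≥ 0 with m = m1+m2 ≥ 1, and let d_0 ∈ U(n_0; 2^{m1} 3^{m2}), …, d_{l−1} ∈ U(n_{l−1}; 2^{m1} 3^{m2}) with n_{l−1} ≥ 2. For 1 ≤ j ≤ l let D^{(j)} denote the (n_0+…+n_{j−1})×(m1+m2) design obtained by stacking d_0,…,d_{j−1}, and set N_{l−1} = n_0+…+n_{l−2}. Then WD(D^{(l)}) ≥ −((n_{l−1}² + 2·N_{l−1}·n_{l−1})/(N_{l−1}+n_{l−1})²)·(4/3)^m + (n_{l−1}/(N_{l−1}+n_{l−1})²)·(3/2)^m + (N_{l−1}²/(N_{l−1}+n_{l−1})²)·WD(D^{(l−1)}) + (1/(N_{l−1}+n_{l−1})²)·(5/4)^{m1}·(23/18)^{m2}·( T_{l+2} + 2·T_{l+1} ), where a = ln(6/5), b = ln(27/23), T_{l+1} = N_{l−1}·n_{l−1}·e^{a·m1/2 + b·m2/3} and T_{l+2} = n_{l−1}(n_{l−1}−1)·e^{a·m1·(n_{l−1}−2)/(2(n_{l−1}−1))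 + b·m2·(n_{l−1}−3)/(3(n_{l−1}−1))}. -/
open Finset

noncomputable section

namespace CAUD

/-- The mapped point value `u = (2x+1)/(2q)`. -/
def uVal (q x : ℕ) : ℝ := (2 * (x : ℝ) + 1) / (2 * (q : ℝ))

/-- The squared wrap-around L2-discrepancy of an `N × M` design whose `k`-th
column takes values in `{0, …, q k - 1}`. -/
def WD {N M : ℕ} (q : Fin M → ℕ) (x : Fin N → Fin M → ℕ) : ℝ :=
  -((4 : ℝ) / 3) ^ M + (1 / (N : ℝ) ^ 2) *
    ∑ i : Fin N, ∑ j : Fin N, ∏ k : Fin M,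
      ((3 : ℝ) / 2 - |uVal (q k) (x i k) - uVal (q k) (x j k)| *
        (1 - |uVal (q k) (x i k) - uVal (q k) (x j k)|))

/-- A mixed-level U-type design in `U(N; 2^{m1} 3^{m2})`: the first `m1` columns are
two-level and balanced, the last `m2` columns are three-level and balanced. -/
def IsUType (N m1 m2 : ℕ) (d : Fin N → Fin (m1 + m2) → ℕ) : Prop :=
  ∀ k : Fin (m1 + m2),
    if (k : ℕ) < m1 then
      (∀ i, d i k < 2) ∧ ∀ v < 2, 2 * (univ.filter (fun i => d i k = v)).card = N
    else
      (∀ i, d i k < 3) ∧ ∀ v < 3, 3 * (univ.filter (fun i => d i k = v)).card = N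

/-- A column-balanced `n1 × r` matrix with entries in `{1, 2}`: every column has
exactly `n1/2` entries equal to 1 and `n1/2` entries equal to 2. -/
def IsBalanced (n1 r : ℕ) (d2 : Fin n1 → Fin r → ℕ) : Prop :=
  (∀ i k, d2 i k = 1 ∨ d2 i k = 2) ∧
  ∀ k, 2 * (univ.filter (fun i => d2 i k = 1)).card = n1 ∧
       2 * (univ.filter (fun i => d2 i k = 2)).card = n1

/-- The column augmented design: first `n` rows are `(d0, 0)`, last `n1` rows `(d1, d2)`. -/
def augDesign (n n1 m r : ℕ) (d0 : Fin n → Fin m → ℕ) (d1 : Fin n1 → Fin m → ℕ)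
    (d2 : Fin n1 → Fin r → ℕ) : Fin (n + n1) → Fin (m + r) → ℕ := fun i k =>
  if hi : (i : ℕ) < n then
    if hk : (k : ℕ) < m then d0 ⟨i, hi⟩ ⟨k, hk⟩ else 0
  else
    if hk : (k : ℕ) < m then d1 ⟨(i : ℕ) - n, by have := i.isLt; omega⟩ ⟨k, hk⟩
    else d2 ⟨(i : ℕ) - n, by have := i.isLt; omega⟩ ⟨(k : ℕ) - m, by have := k.isLt; omega⟩

/-- Append one blocking column: 0 on the initial rows, 1 on the follow-up rows. -/
def appendOne (n n1 M : ℕ) (D : Fin (n + n1) → Fin M → ℕ) :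
    Fin (n + n1) → Fin (M + 1) → ℕ := fun i k =>
  if hk : (k : ℕ) < M then D i ⟨k, hk⟩ else if (i : ℕ) < n then 0 else 1

/-- Append two blocking columns: the first is 0 on the initial rows and 1 on the
follow-up rows; the second is 0 on the initial rows and the first `n1/2` follow-up
rows, and 1 on the remaining follow-up rows. -/
def appendTwo (n n1 M : ℕ) (D : Fin (n + n1) → Fin M → ℕ) :
    Fin (n + n1) → Fin (M + 2) → ℕ := fun i k =>
  if hk : (k : ℕ) < M then D i ⟨k, hk⟩
  else if (k : ℕ) = M then (if (i : ℕ) < n then 0 else 1)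
  else (if (i : ℕ) < n + n1 / 2 then 0 else 1)

/-- Level sizes of the (possibly blocking-augmented) column augmented design:
first `m1` columns are two-level, the next `m2 + r` are three-level, anything
after that (blocking columns) is two-level. -/
def qfun (m1 m2 r k : ℕ) : ℕ :=
  if k < m1 then 2 else if k < m1 + m2 + r then 3 else 2

/-- Coincidence number among the first `m1` columns. -/
def Fco {N M : ℕ} (m1 : ℕ) (D : Fin N → Fin M → ℕ) (i j : Fin N) : ℕ :=
  (univ.filter (fun k : Fin M => (k : ℕ) < m1 ∧ D i k = D j k)).card

/-- Coincidence number among columns `m1, …, m1 + m2 - 1`. -/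
def Vco {N M : ℕ} (m1 m2 : ℕ) (D : Fin N → Fin M → ℕ) (i j : Fin N) : ℕ :=
  (univ.filter (fun k : Fin M => m1 ≤ (k : ℕ) ∧ (k : ℕ) < m1 + m2 ∧ D i k = D j k)).card

/-- Coincidence number among the columns `≥ m`, counting agreements with common
value in `{1, 2}`. -/
def Tco {N M : ℕ} (m : ℕ) (D : Fin N → Fin M → ℕ) (i j : Fin N) : ℕ :=
  (univ.filter (fun k : Fin M =>
    m ≤ (k : ℕ) ∧ D i k = D j k ∧ (D i k = 1 ∨ D i k = 2))).card

/-- Total coincidence number between two rows. -/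
def lam {N M : ℕ} (D : Fin N → Fin M → ℕ) (i j : Fin N) : ℕ :=
  (univ.filter (fun k : Fin M => D i k = D j k)).card

/-- Number of rows whose `k`-th entry is `u` and whose `l`-th entry is `v`. -/
def nuv {N M : ℕ} (d : Fin N → Fin M → ℕ) (k l : Fin M) (u v : ℕ) : ℕ :=
  (univ.filter (fun i : Fin N => d i k = u ∧ d i l = v)).card

/-- Non-orthogonality of a pair of columns. -/
def fNOD {N M : ℕ} (q : Fin M → ℕ) (d : Fin N → Fin M → ℕ) (k l : Fin M) : ℝ :=
  ∑ u ∈ Finset.range (q k), ∑ v ∈ Finset.range (q l),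
    ((nuv d k l u v : ℝ) - (N : ℝ) / ((q k : ℝ) * (q l : ℝ))) ^ 2

/-- The `E(f_NOD)` criterion: average non-orthogonality over all pairs of columns. -/
def EfNOD {N M : ℕ} (q : Fin M → ℕ) (d : Fin N → Fin M → ℕ) : ℝ :=
  (∑ k : Fin M, ∑ l : Fin M, if (k : ℕ) < (l : ℕ) then fNOD q d k l else 0) /
    (Nat.choose M 2 : ℝ)

/-- Stacking the stage designs `d 0, …, d (l-1)` on top of one another. -/
def stack (M : ℕ) (ns : ℕ → ℕ) (d : (j : ℕ) → Fin (ns j) → Fin M → ℕ) :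
    (l : ℕ) → Fin (∑ j ∈ Finset.range l, ns j) → Fin M → ℕ
  | 0 => fun _ _ => 0
  | l + 1 => fun i =>
    let i' : Fin ((∑ j ∈ Finset.range l, ns j) + ns l) :=
      Fin.cast (Finset.sum_range_succ ns l) i
    if h : (i' : ℕ) < ∑ j ∈ Finset.range l, ns j then
      stack M ns d l ⟨(i' : ℕ), h⟩
    else d l ⟨(i' : ℕ) - ∑ j ∈ Finset.range l, ns j, by have := i'.isLt; omega⟩

def aa : ℝ := Real.log (6 / 5)

def bb : ℝ := Real.log (27 / 23)

/-- The constant `C(s)`. -/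
def Cconst (n n1 m s : ℕ) : ℝ :=
  -(((4 : ℝ) / 3) ^ s - ((n : ℝ) ^ 2 / ((n : ℝ) + n1) ^ 2) * ((3 : ℝ) / 2) ^ s) * ((4 : ℝ) / 3) ^ m
  + ((n1 : ℝ) / ((n : ℝ) + n1) ^ 2) * ((3 : ℝ) / 2) ^ (m + s)

def phi1 (n1 m1 m2 r : ℕ) : ℝ :=
  aa * m1 * ((n1 : ℝ) - 2) / (2 * ((n1 : ℝ) - 1)) + bb * m2 * ((n1 : ℝ) - 3) / (3 * ((n1 : ℝ) - 1))
  + bb * r * ((n1 : ℝ) - 2) / (2 * ((n1 : ℝ) - 1))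

def phi2 (m1 m2 : ℕ) : ℝ := aa * m1 / 2 + bb * m2 / 3

def T1c (n1 m1 m2 r : ℕ) : ℝ := (n1 : ℝ) * ((n1 : ℝ) - 1) * Real.exp (phi1 n1 m1 m2 r)

def T2c (n n1 m1 m2 : ℕ) : ℝ := (n : ℝ) * (n1 : ℝ) * Real.exp (phi2 m1 m2)

/-- Lower bound `LBW3` (mixed-level case, Theorem 1). -/
def LBW3 (n n1 m1 m2 r : ℕ) (wd0 : ℝ) : ℝ :=
  Cconst n n1 (m1 + m2) r + ((n : ℝ) ^ 2 / ((n : ℝ) + n1) ^ 2) * ((3 : ℝ) / 2) ^ r * wd0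
  + (1 / ((n : ℝ) + n1) ^ 2) * ((5 : ℝ) / 4) ^ m1 * ((23 : ℝ) / 18) ^ (m2 + r) *
      (T1c n1 m1 m2 r + 2 * T2c n n1 m1 m2)

def phi1p (n1 m r : ℕ) : ℝ :=
  aa * m * ((n1 : ℝ) - 2) / (2 * ((n1 : ℝ) - 1)) + bb * r * ((n1 : ℝ) - 2) / (2 * ((n1 : ℝ) - 1))

def T1pc (n1 m r : ℕ) : ℝ := (n1 : ℝ) * ((n1 : ℝ) - 1) * Real.exp (phi1p n1 m r)

def w1 (m : ℕ) : ℕ := m / 2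

def q1c (n n1 m : ℕ) : ℝ := (m : ℝ) * n * n1 / 2 - (n : ℝ) * n1 * (w1 m : ℝ)

def p1c (n n1 m : ℕ) : ℝ := (n : ℝ) * n1 - q1c n n1 m

/-- Lower bound `LBW3` for a two-level initial design (Theorem 2). -/
def LBW32 (n n1 m r : ℕ) (wd0 : ℝ) : ℝ :=
  Cconst n n1 m r + ((n : ℝ) ^ 2 / ((n : ℝ) + n1) ^ 2) * ((3 : ℝ) / 2) ^ r * wd0
  + (1 / ((n : ℝ) + n1) ^ 2) * ((5 : ℝ) / 4) ^ m * ((23 : ℝ) / 18) ^ r *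
      (T1pc n1 m r + 2 * (p1c n n1 m * ((6 : ℝ) / 5) ^ w1 m + q1c n n1 m * ((6 : ℝ) / 5) ^ (w1 m + 1)))

def w2 (n1 m r : ℕ) : ℤ :=
  ⌊(m : ℝ) * ((n1 : ℝ) - 3) / (3 * ((n1 : ℝ) - 1)) + (r : ℝ) * ((n1 : ℝ) - 2) / (2 * ((n1 : ℝ) - 1))⌋

def q2c (n1 m r : ℕ) : ℝ :=
  (m : ℝ) * n1 * ((n1 : ℝ) - 3) / 3 + (r : ℝ) * n1 * ((n1 : ℝ) - 2) / 2
  - (n1 : ℝ) * ((n1 : ℝ) - 1) * (w2 n1 m r : ℝ)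

def p2c (n1 m r : ℕ) : ℝ := (n1 : ℝ) * ((n1 : ℝ) - 1) - q2c n1 m r

def w3 (m : ℕ) : ℕ := m / 3

def q3c (n n1 m : ℕ) : ℝ := (m : ℝ) * n * n1 / 3 - (n : ℝ) * n1 * (w3 m : ℝ)

def p3c (n n1 m : ℕ) : ℝ := (n : ℝ) * n1 - q3c n n1 m

/-- Lower bound `LBW3` for a three-level initial design (Theorem 3). -/
def LBW33 (n n1 m r : ℕ) (wd0 : ℝ) : ℝ :=
  Cconst n n1 m r + ((n : ℝ) ^ 2 / ((n : ℝ) + n1) ^ 2) * ((3 : ℝ) / 2) ^ r * wd0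
  + (1 / ((n : ℝ) + n1) ^ 2) * ((23 : ℝ) / 18) ^ (m + r) *
      (p2c n1 m r * ((27 : ℝ) / 23) ^ w2 n1 m r + q2c n1 m r * ((27 : ℝ) / 23) ^ (w2 n1 m r + 1)
       + 2 * (p3c n n1 m * ((27 : ℝ) / 23) ^ w3 m + q3c n n1 m * ((27 : ℝ) / 23) ^ (w3 m + 1)))

/-- Lower bound of Theorem 4 for a mixed-level initial design. -/
def LBW3b1 (n n1 m1 m2 r : ℕ) (wd0 : ℝ) : ℝ :=
  Cconst n n1 (m1 + m2) (r + 1) + ((n : ℝ) ^ 2 / ((n : ℝ) + n1) ^ 2) * ((3 : ℝ) / 2) ^ (r + 1) * wd0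
  + (1 / ((n : ℝ) + n1) ^ 2) * ((5 : ℝ) / 4) ^ m1 * ((23 : ℝ) / 18) ^ (m2 + r) *
      ((3 : ℝ) / 2 * T1c n1 m1 m2 r + 2 * ((5 : ℝ) / 4) * T2c n n1 m1 m2)

/-- Lower bound of Theorem 4 for a two-level initial design. -/
def LBW3b2 (n n1 m r : ℕ) (wd0 : ℝ) : ℝ :=
  Cconst n n1 m (r + 1) + ((n : ℝ) ^ 2 / ((n : ℝ) + n1) ^ 2) * ((3 : ℝ) / 2) ^ (r + 1) * wd0
  + (1 / ((n : ℝ) + n1) ^ 2) * ((5 : ℝ) / 4) ^ m * ((23 : ℝ) / 18) ^ r *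
      ((3 : ℝ) / 2 * T1pc n1 m r +
        2 * ((5 : ℝ) / 4) * (p1c n n1 m * ((6 : ℝ) / 5) ^ w1 m + q1c n n1 m * ((6 : ℝ) / 5) ^ (w1 m + 1)))

/-- Lower bound of Theorem 4 for a three-level initial design. -/
def LBW3b3 (n n1 m r : ℕ) (wd0 : ℝ) : ℝ :=
  Cconst n n1 m (r + 1) + ((n : ℝ) ^ 2 / ((n : ℝ) + n1) ^ 2) * ((3 : ℝ) / 2) ^ (r + 1) * wd0
  + (1 / ((n : ℝ) + n1) ^ 2) * ((23 : ℝ) / 18) ^ (m + r) *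
      ((3 : ℝ) / 2 * (p2c n1 m r * ((27 : ℝ) / 23) ^ w2 n1 m r
                      + q2c n1 m r * ((27 : ℝ) / 23) ^ (w2 n1 m r + 1))
       + 2 * ((5 : ℝ) / 4) * (p3c n n1 m * ((27 : ℝ) / 23) ^ w3 m
                              + q3c n n1 m * ((27 : ℝ) / 23) ^ (w3 m + 1)))

def phi1B (n1 m1 m2 r : ℕ) : ℝ :=
  aa * ((m1 : ℝ) + 1) * ((n1 : ℝ) - 2) / (2 * ((n1 : ℝ) - 1))
  + bb * m2 * ((n1 : ℝ) - 3) / (3 * ((n1 : ℝ) - 1))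
  + bb * r * ((n1 : ℝ) - 2) / (2 * ((n1 : ℝ) - 1))

def phi2B (m1 m2 : ℕ) : ℝ := aa * ((m1 : ℝ) + 1) / 2 + bb * m2 / 3

def T1Bc (n1 m1 m2 r : ℕ) : ℝ := (n1 : ℝ) * ((n1 : ℝ) - 1) * Real.exp (phi1B n1 m1 m2 r)

def T2Bc (n n1 m1 m2 : ℕ) : ℝ := (n : ℝ) * (n1 : ℝ) * Real.exp (phi2B m1 m2)

/-- Lower bound `LBW3B` (Theorem 5). -/
def LBW3B (n n1 m1 m2 r : ℕ) (wd0 : ℝ) : ℝ :=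
  Cconst n n1 (m1 + m2) (r + 2) + ((n : ℝ) ^ 2 / ((n : ℝ) + n1) ^ 2) * ((3 : ℝ) / 2) ^ (r + 2) * wd0
  + (1 / ((n : ℝ) + n1) ^ 2) * ((5 : ℝ) / 4) ^ (m1 + 1) * ((23 : ℝ) / 18) ^ (m2 + r) *
      ((3 : ℝ) / 2 * T1Bc n1 m1 m2 r + 2 * ((5 : ℝ) / 4) * T2Bc n n1 m1 m2)

def psi1 (n1 m1 m2 r : ℕ) : ℤ :=
  ⌊((m1 : ℝ) * ((n1 : ℝ) - 2) / 2 + (m2 : ℝ) * ((n1 : ℝ) - 3) / 3 + (r : ℝ) * ((n1 : ℝ) - 2) / 2) /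
      ((n1 : ℝ) - 1)⌋

def eta1 (n1 m1 m2 r : ℕ) : ℝ :=
  (m1 : ℝ) * n1 * ((n1 : ℝ) - 2) / 2 + (m2 : ℝ) * n1 * ((n1 : ℝ) - 3) / 3
  + (r : ℝ) * n1 * ((n1 : ℝ) - 2) / 2 - (n1 : ℝ) * ((n1 : ℝ) - 1) * (psi1 n1 m1 m2 r : ℝ)

def zeta1 (n1 m1 m2 r : ℕ) : ℝ := (n1 : ℝ) * ((n1 : ℝ) - 1) - eta1 n1 m1 m2 r

def psi2 (m1 m2 : ℕ) : ℤ := ⌊(m1 : ℝ) / 2 + (m2 : ℝ) / 3⌋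

def eta2 (n n1 m1 m2 : ℕ) : ℝ :=
  (m1 : ℝ) * n * n1 / 2 + (m2 : ℝ) * n * n1 / 3 - (n : ℝ) * n1 * (psi2 m1 m2 : ℝ)

def zeta2 (n n1 m1 m2 : ℕ) : ℝ := (n : ℝ) * n1 - eta2 n n1 m1 m2

def Q1c (n1 m1 m2 r : ℕ) : ℝ :=
  zeta1 n1 m1 m2 r * (psi1 n1 m1 m2 r : ℝ) ^ 2 + eta1 n1 m1 m2 r * ((psi1 n1 m1 m2 r : ℝ) + 1) ^ 2

def Q1pc (n1 m1 m2 r : ℕ) : ℝ :=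
  zeta1 n1 m1 m2 r * ((psi1 n1 m1 m2 r : ℝ) + 1) ^ 2 + eta1 n1 m1 m2 r * ((psi1 n1 m1 m2 r : ℝ) + 2) ^ 2

def Q2c (n n1 m1 m2 : ℕ) : ℝ :=
  zeta2 n n1 m1 m2 * (psi2 m1 m2 : ℝ) ^ 2 + eta2 n n1 m1 m2 * ((psi2 m1 m2 : ℝ) + 1) ^ 2

/-- Lower bound `LBf3` for `E(f_NOD)` of the column augmented design. -/
def LBf3 (n n1 m1 m2 r : ℕ) (ef0 : ℝ) : ℝ :=
  ((m1 : ℝ) + m2) * ((m1 : ℝ) + m2 - 1) / (((m1 : ℝ) + m2 + r) * ((m1 : ℝ) + m2 + r - 1)) * ef0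
  + 1 / (((m1 : ℝ) + m2 + r) * ((m1 : ℝ) + m2 + r - 1)) * (Q1c n1 m1 m2 r + 2 * Q2c n n1 m1 m2)
  + ((n : ℝ) + n1) * ((m1 : ℝ) + m2 + r) / ((m1 : ℝ) + m2 + r - 1)
  - 1 / (((m1 : ℝ) + m2 + r) * ((m1 : ℝ) + m2 + r - 1)) *
    ((n : ℝ) * ((m1 : ℝ) + m2) ^ 2
      - (n : ℝ) ^ 2 * (((m1 : ℝ) + (m1 : ℝ) ^ 2) / 4 + (2 * (m2 : ℝ) + (m2 : ℝ) ^ 2) / 9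
          + (m1 : ℝ) * m2 / 3)
      - (r : ℝ) * m1 * n * ((n : ℝ) - 2)
      - 2 * (r : ℝ) * m2 * n * ((n : ℝ) - 3) / 3
      - (n : ℝ) * ((n : ℝ) - 1) * (r : ℝ) ^ 2
      + (r : ℝ) * ((n : ℝ) ^ 2 + (n1 : ℝ) ^ 2 / 2)
      + ((m1 : ℝ) / 2 + (m2 : ℝ) / 3 + (m1 : ℝ) * ((m1 : ℝ) - 1) / 4
          + ((m2 : ℝ) + r) * ((m2 : ℝ) + r - 1) / 9 + (m1 : ℝ) * ((m2 : ℝ) + r) / 3)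
        * ((n : ℝ) + n1) ^ 2)

/-- Lower bound `LBf3b` for `E(f_NOD)` of the design with one added blocking column. -/
def LBf3b (n n1 m1 m2 r : ℕ) (ef0 : ℝ) : ℝ :=
  ((m1 : ℝ) + m2) * ((m1 : ℝ) + m2 - 1) / (((m1 : ℝ) + m2 + r + 1) * ((m1 : ℝ) + m2 + r)) * ef0
  + 1 / (((m1 : ℝ) + m2 + r + 1) * ((m1 : ℝ) + m2 + r)) * (Q1pc n1 m1 m2 r + 2 * Q2c n n1 m1 m2)
  + ((n : ℝ) + n1) * ((m1 : ℝ) + m2 + r + 1) / ((m1 : ℝ) + m2 + r)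
  - 1 / (((m1 : ℝ) + m2 + r + 1) * ((m1 : ℝ) + m2 + r)) *
    ((n : ℝ) * ((m1 : ℝ) + m2) ^ 2
      - (n : ℝ) ^ 2 * (((m1 : ℝ) + (m1 : ℝ) ^ 2) / 4 + (2 * (m2 : ℝ) + (m2 : ℝ) ^ 2) / 9
          + (m1 : ℝ) * m2 / 3)
      - ((r : ℝ) + 1) * m1 * n * ((n : ℝ) - 2)
      - 2 * ((r : ℝ) + 1) * m2 * n * ((n : ℝ) - 3) / 3
      - (n : ℝ) * ((n : ℝ) - 1) * ((r : ℝ) + 1) ^ 2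
      + (r : ℝ) * ((n : ℝ) ^ 2 + (n1 : ℝ) ^ 2 / 2) + (n : ℝ) ^ 2 + (n1 : ℝ) ^ 2
      + ((m1 : ℝ) / 2 + (m2 : ℝ) / 3 + (m1 : ℝ) * ((m1 : ℝ) + 1) / 4
          + ((m2 : ℝ) + r) * ((m2 : ℝ) + r - 1) / 9 + ((m1 : ℝ) + 1) * ((m2 : ℝ) + r) / 3)
        * ((n : ℝ) + n1) ^ 2)

/-- Lower bound `LBf3B` for `E(f_NOD)` of the design with two added blocking columns. -/
def LBf3B (n n1 m1 m2 r : ℕ) (ef0 : ℝ) : ℝ :=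
  ((m1 : ℝ) + m2) * ((m1 : ℝ) + m2 - 1) / (((m1 : ℝ) + m2 + r + 2) * ((m1 : ℝ) + m2 + r + 1)) * ef0
  + 1 / (((m1 : ℝ) + m2 + r + 2) * ((m1 : ℝ) + m2 + r + 1)) *
      (Q1pc n1 (m1 + 1) m2 r + 2 * Q2c n n1 (m1 + 1) m2)
  + ((n : ℝ) + n1) * ((m1 : ℝ) + m2 + r + 2) / ((m1 : ℝ) + m2 + r + 1)
  - 1 / (((m1 : ℝ) + m2 + r + 2) * ((m1 : ℝ) + m2 + r + 1)) *
    ((n : ℝ) * ((m1 : ℝ) + m2) ^ 2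
      - (n : ℝ) ^ 2 * (((m1 : ℝ) + (m1 : ℝ) ^ 2) / 4 + (2 * (m2 : ℝ) + (m2 : ℝ) ^ 2) / 9
          + (m1 : ℝ) * m2 / 3)
      - ((r : ℝ) + 2) * m1 * n * ((n : ℝ) - 2)
      - 2 * ((r : ℝ) + 2) * m2 * n * ((n : ℝ) - 3) / 3
      - (n : ℝ) * ((n : ℝ) - 1) * ((r : ℝ) + 2) ^ 2
      + ((r : ℝ) + 2) * (n : ℝ) ^ 2 + (3 + (r : ℝ)) * (n1 : ℝ) ^ 2 / 2 + (n : ℝ) * n1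
      + ((m1 : ℝ) / 2 + (m2 : ℝ) / 3 + ((m1 : ℝ) + 2) * ((m1 : ℝ) + 1) / 4
          + ((m2 : ℝ) + r) * ((m2 : ℝ) + r - 1) / 9 + ((m1 : ℝ) + 2) * ((m2 : ℝ) + r) / 3)
        * ((n : ℝ) + n1) ^ 2)

/-! For rows with two- and three-level columns the wrap-around kernel factors as
`(5/4)^m1 (23/18)^m2 exp(a F + b V)`, where `F` and `V` count the coinciding two- and
three-level columns. Splitting the double sum of `WD(D^(l))` along the last stage leaves the
old block `N^2 (WD(D^(l-1)) + (4/3)^m)`, two equal cross blocks and the new block. Since every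
column of `d_(l-1)` is balanced, the total of `a F + b V` over the cross pairs, and over the
off-diagonal pairs of the new block, is known exactly, and Jensen's inequality for `exp` turns
these totals into the terms `T_(l+1)` and `T_(l+2)`. -/

def wdFactor (q u v : ℕ) : ℝ :=
  3 / 2 - |uVal q u - uVal q v| * (1 - |uVal q u - uVal q v|)

def wdKernel {M : ℕ} (q : Fin M → ℕ) (x y : Fin M → ℕ) : ℝ :=
  ∏ k, wdFactor (q k) (x k) (y k)

lemma sum_sum_wdKernel_eq {N M : ℕ} (q : Fin M → ℕ) (x : Fin N → Fin M → ℕ) :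
    ∑ i, ∑ j, wdKernel q (x i) (x j) = (N : ℝ) ^ 2 * (WD q x + (4 / 3) ^ M) := by
  rcases Nat.eq_zero_or_pos N with rfl | hN
  · simp
  · have hWD : WD q x = -(4 / 3) ^ M + 1 / (N : ℝ) ^ 2 * ∑ i, ∑ j, wdKernel q (x i) (x j) := rfl
    rw [hWD]
    field_simp
    ring

lemma wdKernel_self {M : ℕ} (q : Fin M → ℕ) (x : Fin M → ℕ) :
    wdKernel q x x = (3 / 2) ^ M := by
  simp [wdKernel, wdFactor, div_pow]

lemma wdKernel_comm {M : ℕ} (q : Fin M → ℕ) (x y : Fin M → ℕ) :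
    wdKernel q x y = wdKernel q y x := by
  simp only [wdKernel, wdFactor, abs_sub_comm]

lemma wdFactor_two {u v : ℕ} (hu : u < 2) (hv : v < 2) :
    wdFactor 2 u v = 5 / 4 * Real.exp (aa * if u = v then 1 else 0) := by
  interval_cases u <;> interval_cases v <;>
    norm_num [wdFactor, uVal, aa, abs_div, Real.exp_log]

lemma wdFactor_three {u v : ℕ} (hu : u < 3) (hv : v < 3) :
    wdFactor 3 u v = 23 / 18 * Real.exp (bb * if u = v then 1 else 0) := by
  interval_cases u <;> interval_cases v <;>
    norm_num [wdFactor, uVal, bb, abs_div, Real.exp_log]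

def coinc {M : ℕ} (x y : Fin M → ℕ) : ℕ := #{k | x k = y k}

lemma coinc_self {M : ℕ} (x : Fin M → ℕ) : coinc x x = M := by
  simp [coinc]

lemma prod_wdFactor_eq_pow_mul_exp {M q : ℕ} {c a : ℝ} (x y : Fin M → ℕ)
    (h : ∀ k, wdFactor q (x k) (y k) = c * Real.exp (a * if x k = y k then 1 else 0)) :
    ∏ k, wdFactor q (x k) (y k) = c ^ M * Real.exp (a * coinc x y) := by
  simp only [h, prod_mul_distrib, prod_const, card_univ, Fintype.card_fin, ← Real.exp_sum,
    ← mul_sum, coinc, card_filter, Nat.cast_sum, Nat.cast_ite, Nat.cast_one, Nat.cast_zero]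

lemma sum_sum_coinc {A B M q : ℕ} (x : Fin A → Fin M → ℕ) (y : Fin B → Fin M → ℕ)
    (hx : ∀ i k, x i k < q) (hy : ∀ k, ∀ v < q, q * #{j | y j k = v} = B) :
    q * ∑ i, ∑ j, coinc (x i) (y j) = M * (A * B) := by
  have hcol : ∀ i k, q * ∑ j, (if x i k = y j k then 1 else 0) = B := fun i k => by
    rw [← card_filter]
    simpa only [eq_comm] using hy k _ (hx i k)
  calc q * ∑ i, ∑ j, coinc (x i) (y j)
      = ∑ i, ∑ k, q * ∑ j, (if x i k = y j k then 1 else 0) := by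
        simp only [coinc, card_filter, mul_sum]
        exact sum_congr rfl fun i _ => sum_comm
    _ = M * (A * B) := by
        simp only [hcol, sum_const, card_univ, Fintype.card_fin, smul_eq_mul]
        ring

lemma card_mul_exp_le_sum_exp {ι : Type*} (s : Finset ι) (f : ι → ℝ) {c : ℝ}
    (h : ∑ i ∈ s, f i = #s * c) : #s * Real.exp c ≤ ∑ i ∈ s, Real.exp (f i) := by
  have htangent : ∀ i, Real.exp c * (f i - c + 1) ≤ Real.exp (f i) := fun i => by
    calc Real.exp c * (f i - c + 1) ≤ Real.exp c * Real.exp (f i - c) :=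
          mul_le_mul_of_nonneg_left (Real.add_one_le_exp _) (Real.exp_pos c).le
      _ = Real.exp (f i) := by rw [← Real.exp_add, add_sub_cancel]
  calc #s * Real.exp c = ∑ i ∈ s, Real.exp c * (f i - c + 1) := by
        simp only [← mul_sum, sum_add_distrib, sum_sub_distrib, h, sum_const, nsmul_eq_mul]
        ring
    _ ≤ ∑ i ∈ s, Real.exp (f i) := sum_le_sum fun i _ => htangent i

lemma sum_sum_eq_sum_add_sum_offDiag {ι β : Type*} [Fintype ι] [DecidableEq ι]
    [AddCommMonoid β] (g : ι → ι → β) :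
    ∑ i, ∑ j, g i j = ∑ i, g i i + ∑ p ∈ univ.offDiag, g p.1 p.2 := by
  rw [← sum_product', ← diag_union_offDiag, sum_union (disjoint_diag_offDiag _), sum_diag]

section Stack

variable {M : ℕ} {ns : ℕ → ℕ} (d : (j : ℕ) → Fin (ns j) → Fin M → ℕ)

lemma sum_stack_succ {β : Type*} [AddCommMonoid β] (L : ℕ) (f : (Fin M → ℕ) → β) :
    ∑ i, f (stack M ns d (L + 1) i) = ∑ i, f (stack M ns d L i) + ∑ j, f (d L j) := by
  rw [← (finCongr (sum_range_succ ns L)).symm.sum_comp, Fin.sum_univ_add]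
  congr 1
  · refine sum_congr rfl fun i _ => ?_
    simp [stack]
  · refine sum_congr rfl fun j _ => ?_
    simp [stack]

lemma exists_stack_eq_stage (L : ℕ) (i : Fin (∑ j ∈ range L, ns j)) :
    ∃ j < L, ∃ r, stack M ns d L i = d j r := by
  induction L with
  | zero => exact absurd i.isLt (by simp)
  | succ L ih =>
    simp only [stack]
    split_ifs with h
    · obtain ⟨j, hj, r, hr⟩ := ih _
      exact ⟨j, by omega, r, hr⟩
    · exact ⟨L, by omega, _, rfl⟩

lemma sum_sum_wdKernel_stack_succ (q : Fin M → ℕ) (L : ℕ) :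
    ∑ i, ∑ j, wdKernel q (stack M ns d (L + 1) i) (stack M ns d (L + 1) j)
      = ∑ i, ∑ j, wdKernel q (stack M ns d L i) (stack M ns d L j)
        + 2 * ∑ i, ∑ j, wdKernel q (stack M ns d L i) (d L j)
        + ∑ i, ∑ j, wdKernel q (d L i) (d L j) := by
  rw [sum_stack_succ d L fun x => ∑ j, wdKernel q x (stack M ns d (L + 1) j)]
  simp only [sum_stack_succ, sum_add_distrib]
  rw [sum_comm (f := fun i j => wdKernel q (d L i) (stack M ns d L j))]
  have hsymm : ∑ j, ∑ i, wdKernel q (d L i) (stack M ns d L j)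
      = ∑ j, ∑ i, wdKernel q (stack M ns d L j) (d L i) :=
    sum_congr rfl fun _ _ => sum_congr rfl fun _ _ => wdKernel_comm _ _ _
  rw [hsymm]
  ring

end Stack

section MixedLevel

variable {m1 m2 : ℕ}

def coincExponent (m1 m2 : ℕ) (x y : Fin (m1 + m2) → ℕ) : ℝ :=
  aa * coinc (fun i : Fin m1 => x (Fin.castAdd m2 i)) (fun i => y (Fin.castAdd m2 i))
    + bb * coinc (fun j : Fin m2 => x (Fin.natAdd m1 j)) (fun j => y (Fin.natAdd m1 j))

lemma qfun_castAdd (i : Fin m1) : qfun m1 m2 0 (Fin.castAdd m2 i) = 2 := by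
  simp [qfun]

lemma qfun_natAdd (j : Fin m2) : qfun m1 m2 0 (Fin.natAdd m1 j) = 3 := by
  simp [qfun]

lemma wdKernel_qfun_eq {x y : Fin (m1 + m2) → ℕ} (hx : ∀ k, x k < qfun m1 m2 0 k)
    (hy : ∀ k, y k < qfun m1 m2 0 k) :
    wdKernel (fun k : Fin (m1 + m2) => qfun m1 m2 0 k) x y
      = (5 / 4) ^ m1 * (23 / 18) ^ m2 * Real.exp (coincExponent m1 m2 x y) := by
  rw [wdKernel, Fin.prod_univ_add, coincExponent, Real.exp_add]
  simp only [qfun_castAdd, qfun_natAdd]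
  rw [prod_wdFactor_eq_pow_mul_exp _ _ fun i => wdFactor_two
      ((hx _).trans_eq (qfun_castAdd i)) ((hy _).trans_eq (qfun_castAdd i)),
    prod_wdFactor_eq_pow_mul_exp _ _ fun j => wdFactor_three
      ((hx _).trans_eq (qfun_natAdd j)) ((hy _).trans_eq (qfun_natAdd j))]
  ring

namespace IsUType

variable {N : ℕ} {d : Fin N → Fin (m1 + m2) → ℕ}

lemma lt_qfun (hd : IsUType N m1 m2 d) (i : Fin N) (k : Fin (m1 + m2)) :
    d i k < qfun m1 m2 0 k := by
  have hk := hd k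
  unfold qfun
  split_ifs at hk ⊢ with h1 h2
  · exact hk.1 i
  · exact hk.1 i
  · omega

lemma card_two (hd : IsUType N m1 m2 d) (k : Fin m1) :
    ∀ v < 2, 2 * #{i | d i (Fin.castAdd m2 k) = v} = N := by
  have hk := hd (Fin.castAdd m2 k)
  rw [if_pos (Fin.castAdd_lt m2 k)] at hk
  exact hk.2

lemma card_three (hd : IsUType N m1 m2 d) (k : Fin m2) :
    ∀ v < 3, 3 * #{i | d i (Fin.natAdd m1 k) = v} = N := by
  have hk := hd (Fin.natAdd m1 k)
  rw [if_neg (by simp)] at hk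
  exact hk.2

end IsUType

lemma coincExponent_self (x : Fin (m1 + m2) → ℕ) :
    coincExponent m1 m2 x x = aa * m1 + bb * m2 := by
  simp only [coincExponent, coinc_self]

lemma sum_sum_coincExponent {A B : ℕ} {X : Fin A → Fin (m1 + m2) → ℕ}
    {Y : Fin B → Fin (m1 + m2) → ℕ} (hX : ∀ i k, X i k < qfun m1 m2 0 k)
    (hY : IsUType B m1 m2 Y) :
    ∑ i, ∑ j, coincExponent m1 m2 (X i) (Y j) = A * B * phi2 m1 m2 := by
  have htwo : (2 : ℝ) * ∑ i, ∑ j, (coinc (fun k : Fin m1 => X i (Fin.castAdd m2 k))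
      (fun k => Y j (Fin.castAdd m2 k)) : ℝ) = m1 * (A * B) := by
    exact_mod_cast sum_sum_coinc (q := 2) _ _ (fun i k => (hX i _).trans_eq (qfun_castAdd k))
      hY.card_two
  have hthree : (3 : ℝ) * ∑ i, ∑ j, (coinc (fun k : Fin m2 => X i (Fin.natAdd m1 k))
      (fun k => Y j (Fin.natAdd m1 k)) : ℝ) = m2 * (A * B) := by
    exact_mod_cast sum_sum_coinc (q := 3) _ _ (fun i k => (hX i _).trans_eq (qfun_natAdd k))
      hY.card_three
  simp only [coincExponent, sum_add_distrib, ← mul_sum, phi2]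
  linear_combination aa / 2 * htwo + bb / 3 * hthree

lemma card_mul_exp_le_sum_wdKernel {ι : Type*} (s : Finset ι) {x y : ι → Fin (m1 + m2) → ℕ}
    (hx : ∀ i k, x i k < qfun m1 m2 0 k) (hy : ∀ i k, y i k < qfun m1 m2 0 k) {c : ℝ}
    (h : ∑ i ∈ s, coincExponent m1 m2 (x i) (y i) = #s * c) :
    (5 / 4) ^ m1 * (23 / 18) ^ m2 * (#s * Real.exp c)
      ≤ ∑ i ∈ s, wdKernel (fun k : Fin (m1 + m2) => qfun m1 m2 0 k) (x i) (y i) := by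
  simp only [wdKernel_qfun_eq (hx _) (hy _), ← mul_sum]
  exact mul_le_mul_of_nonneg_left (card_mul_exp_le_sum_exp s _ h) (by positivity)

lemma T2c_le_sum_sum_wdKernel {A B : ℕ} {X : Fin A → Fin (m1 + m2) → ℕ}
    {Y : Fin B → Fin (m1 + m2) → ℕ} (hX : ∀ i k, X i k < qfun m1 m2 0 k)
    (hY : IsUType B m1 m2 Y) :
    (5 / 4) ^ m1 * (23 / 18) ^ m2 * T2c A B m1 m2
      ≤ ∑ i, ∑ j, wdKernel (fun k : Fin (m1 + m2) => qfun m1 m2 0 k) (X i) (Y j) := by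
  have hcard : (#(univ : Finset (Fin A × Fin B)) : ℝ) = A * B := by simp
  have h := card_mul_exp_le_sum_wdKernel (univ : Finset (Fin A × Fin B))
    (x := fun p => X p.1) (y := fun p => Y p.2) (fun p => hX p.1) (fun p => hY.lt_qfun p.2)
    (c := phi2 m1 m2) (by rw [Fintype.sum_prod_type, hcard, sum_sum_coincExponent hX hY])
  rw [Fintype.sum_prod_type, hcard] at h
  rw [T2c]
  linarith

lemma T1c_le_sum_sum_wdKernel {B : ℕ} (hB : 2 ≤ B) {Y : Fin B → Fin (m1 + m2) → ℕ}
    (hY : IsUType B m1 m2 Y) :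
    B * (3 / 2) ^ (m1 + m2) + (5 / 4) ^ m1 * (23 / 18) ^ m2 * T1c B m1 m2 0
      ≤ ∑ i, ∑ j, wdKernel (fun k : Fin (m1 + m2) => qfun m1 m2 0 k) (Y i) (Y j) := by
  have hB1 : (B : ℝ) - 1 ≠ 0 := by
    have : (2 : ℝ) ≤ B := by exact_mod_cast hB
    linarith
  have hcard : (#(univ : Finset (Fin B)).offDiag : ℝ) = B * (B - 1) := by
    rw [offDiag_card, card_univ, Fintype.card_fin, Nat.cast_sub (Nat.le_mul_self B)]
    push_cast
    ring
  have hoff : ∑ p ∈ univ.offDiag, coincExponent m1 m2 (Y p.1) (Y p.2)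
      = #(univ : Finset (Fin B)).offDiag * phi1 B m1 m2 0 := by
    have hall := sum_sum_coincExponent (fun i => hY.lt_qfun i) hY
    rw [sum_sum_eq_sum_add_sum_offDiag] at hall
    simp only [coincExponent_self, sum_const, card_univ, Fintype.card_fin, nsmul_eq_mul] at hall
    rw [phi2] at hall
    rw [hcard, phi1]
    field_simp
    linear_combination 6 * hall
  have h := card_mul_exp_le_sum_wdKernel (univ : Finset (Fin B)).offDiag
    (fun p => hY.lt_qfun p.1) (fun p => hY.lt_qfun p.2) hoff
  rw [sum_sum_eq_sum_add_sum_offDiag]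
  simp only [wdKernel_self, sum_const, card_univ, Fintype.card_fin, nsmul_eq_mul]
  rw [hcard] at h
  rw [T1c]
  linarith

end MixedLevel

theorem paper_stmt_13_general (l m1 m2 : ℕ) (hl : 2 ≤ l) (ns : ℕ → ℕ)
    (hnl : 2 ≤ ns (l - 1))
    (d : (j : ℕ) → Fin (ns j) → Fin (m1 + m2) → ℕ)
    (hU : ∀ j < l, IsUType (ns j) m1 m2 (d j)) :
    WD (fun k : Fin (m1 + m2) => qfun m1 m2 0 (k : ℕ)) (stack (m1 + m2) ns d l) ≥
      -(((ns (l - 1) : ℝ) ^ 2 +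
            2 * ((∑ j ∈ Finset.range (l - 1), ns j : ℕ) : ℝ) * (ns (l - 1) : ℝ)) /
          (((∑ j ∈ Finset.range (l - 1), ns j : ℕ) : ℝ) + (ns (l - 1) : ℝ)) ^ 2) *
        ((4 : ℝ) / 3) ^ (m1 + m2)
      + ((ns (l - 1) : ℝ) /
            (((∑ j ∈ Finset.range (l - 1), ns j : ℕ) : ℝ) + (ns (l - 1) : ℝ)) ^ 2) *
          ((3 : ℝ) / 2) ^ (m1 + m2)
      + (((∑ j ∈ Finset.range (l - 1), ns j : ℕ) : ℝ) ^ 2 /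
            (((∑ j ∈ Finset.range (l - 1), ns j : ℕ) : ℝ) + (ns (l - 1) : ℝ)) ^ 2) *
          WD (fun k : Fin (m1 + m2) => qfun m1 m2 0 (k : ℕ)) (stack (m1 + m2) ns d (l - 1))
      + (1 / (((∑ j ∈ Finset.range (l - 1), ns j : ℕ) : ℝ) + (ns (l - 1) : ℝ)) ^ 2) *
          ((5 : ℝ) / 4) ^ m1 * ((23 : ℝ) / 18) ^ m2 *
          (T1c (ns (l - 1)) m1 m2 0 +
            2 * T2c (∑ j ∈ Finset.range (l - 1), ns j) (ns (l - 1)) m1 m2) := by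
  obtain ⟨L, rfl⟩ : ∃ L, l = L + 1 := ⟨l - 1, by omega⟩
  rw [Nat.add_sub_cancel] at hnl ⊢
  set q := fun k : Fin (m1 + m2) => qfun m1 m2 0 k
  have hY := hU L (by omega)
  have hX (i k) : stack (m1 + m2) ns d L i k < qfun m1 m2 0 k := by
    obtain ⟨j, hj, r, hr⟩ := exists_stack_eq_stage d L i
    exact hr ▸ (hU j (by omega)).lt_qfun r k
  have hcard : ((∑ j ∈ range (L + 1), ns j : ℕ) : ℝ) = (∑ j ∈ range L, ns j : ℕ) + ns L := by
    rw [sum_range_succ, Nat.cast_add]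
  have hsplit := sum_sum_wdKernel_stack_succ d q L
  have hnew := sum_sum_wdKernel_eq q (stack _ ns d (L + 1))
  have hold := sum_sum_wdKernel_eq q (stack _ ns d L)
  have hcross := T2c_le_sum_sum_wdKernel hX hY
  have hwithin := T1c_le_sum_sum_wdKernel hnl hY
  rw [hcard] at hnew
  set N : ℝ := ((∑ j ∈ range L, ns j : ℕ) : ℝ)
  have hpos : (0 : ℝ) < N + ns L := by
    have : (2 : ℝ) ≤ ns L := by exact_mod_cast hnl
    positivity
  refine le_of_mul_le_mul_left ?_ (pow_pos hpos 2)
  field_simp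
  linarith

theorem paper_stmt_13 (l m1 m2 : ℕ) (hl : 2 ≤ l) (hm : 1 ≤ m1 + m2) (ns : ℕ → ℕ)
    (hnl : 2 ≤ ns (l - 1))
    (d : (j : ℕ) → Fin (ns j) → Fin (m1 + m2) → ℕ)
    (hU : ∀ j < l, IsUType (ns j) m1 m2 (d j)) :
    WD (fun k : Fin (m1 + m2) => qfun m1 m2 0 (k : ℕ)) (stack (m1 + m2) ns d l) ≥
      -(((ns (l - 1) : ℝ) ^ 2 +
            2 * ((∑ j ∈ Finset.range (l - 1), ns j : ℕ) : ℝ) * (ns (l - 1) : ℝ)) /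
          (((∑ j ∈ Finset.range (l - 1), ns j : ℕ) : ℝ) + (ns (l - 1) : ℝ)) ^ 2) *
        ((4 : ℝ) / 3) ^ (m1 + m2)
      + ((ns (l - 1) : ℝ) /
            (((∑ j ∈ Finset.range (l - 1), ns j : ℕ) : ℝ) + (ns (l - 1) : ℝ)) ^ 2) *
          ((3 : ℝ) / 2) ^ (m1 + m2)
      + (((∑ j ∈ Finset.range (l - 1), ns j : ℕ) : ℝ) ^ 2 /
            (((∑ j ∈ Finset.range (l - 1), ns j : ℕ) : ℝ) + (ns (l - 1) : ℝ)) ^ 2) *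
          WD (fun k : Fin (m1 + m2) => qfun m1 m2 0 (k : ℕ)) (stack (m1 + m2) ns d (l - 1))
      + (1 / (((∑ j ∈ Finset.range (l - 1), ns j : ℕ) : ℝ) + (ns (l - 1) : ℝ)) ^ 2) *
          ((5 : ℝ) / 4) ^ m1 * ((23 : ℝ) / 18) ^ m2 *
          (T1c (ns (l - 1)) m1 m2 0 +
            2 * T2c (∑ j ∈ Finset.range (l - 1), ns j) (ns (l - 1)) m1 m2) :=
  paper_stmt_13_general l m1 m2 hl ns hnl d hU

end CAUD

end
end

section
/- Let n ≥ 1, n1 ≥ 2, r ≥ 0, m1, m2 ≥ 0 with m = m1+m2 ≥ 2, let d0 ∈ U(n; 2^{m1} 3^{m2}), d1 ∈ U(n1; 2^{m1} 3^{m2}), let d2 be a column-balanced n1×r matrix with entries in {1,2}, let D3 be the corresponding column augmented design and D3b the design D3 with the appended blocking column. Then E(f_NOD)(D3) = LBf3 if and only if E(f_NOD)(D3b) = LBf3b. -/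
open Finset

noncomputable section

namespace CAUD

/-! Appending the blocking column only adds the pairs (k, block), so
`C(M+1,2)·E(D3b) = C(M,2)·E(D3) + S`, where `S` is the total non-orthogonality of the blocking
column against the others. `S = blockingNOD` depends only on the balance of the columns:
`(n-n1)²/(2q)` for a balanced `q`-level column and `n² + n1²/2 - (n+n1)²/6` for a column of `d2`
(which is 0 on the initial rows). The bounds satisfy the same relation
`C(M+1,2)·LBf3b = C(M,2)·LBf3 + S` identically, because
`Q1' - Q1 = (ζ1 + η1) + 2(ζ1 ψ1 + η1 (ψ1 + 1))`. -/

def blockingNOD (n n1 m1 m2 r : ℕ) : ℝ :=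
  ((m1 : ℝ) / 4 + (m2 : ℝ) / 6) * ((n : ℝ) - n1) ^ 2
    + r * ((n : ℝ) ^ 2 + (n1 : ℝ) ^ 2 / 2 - ((n : ℝ) + n1) ^ 2 / 6)

lemma cast_choose_two_ne_zero {N : ℕ} (hN : 2 ≤ N) : (N.choose 2 : ℝ) ≠ 0 := by
  exact_mod_cast (Nat.choose_pos hN).ne'

lemma sum_pairs_lt_castSucc {M : ℕ} (f : Fin (M + 1) → Fin (M + 1) → ℝ) :
    (∑ k : Fin (M + 1), ∑ l : Fin (M + 1), if (k : ℕ) < (l : ℕ) then f k l else 0) =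
      (∑ k : Fin M, ∑ l : Fin M, if (k : ℕ) < (l : ℕ) then f k.castSucc l.castSucc else 0)
        + ∑ k : Fin M, f k.castSucc (Fin.last M) := by
  simp [Fin.sum_univ_castSucc, sum_add_distrib, Fin.castSucc_lt_last,
    fun i : Fin M => (Fin.castSucc_lt_last i).not_gt]

section Blocking

variable {n n1 M : ℕ} (D : Fin (n + n1) → Fin M → ℕ)

@[simp]
lemma appendOne_castSucc (i : Fin (n + n1)) (k : Fin M) :
    appendOne n n1 M D i k.castSucc = D i k := by
  simp [appendOne]

@[simp]
lemma appendOne_castAdd_last (i : Fin n) :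
    appendOne n n1 M D (Fin.castAdd n1 i) (Fin.last M) = 0 := by
  simp [appendOne]

@[simp]
lemma appendOne_natAdd_last (i : Fin n1) :
    appendOne n n1 M D (Fin.natAdd n i) (Fin.last M) = 1 := by
  simp [appendOne]

lemma fNOD_appendOne_castSucc (q : Fin (M + 1) → ℕ) (k l : Fin M) :
    fNOD q (appendOne n n1 M D) k.castSucc l.castSucc = fNOD (fun k => q k.castSucc) D k l := by
  simp [fNOD, nuv]

lemma EfNOD_appendOne_mul_choose (hM : 2 ≤ M) (q : Fin (M + 1) → ℕ) :
    EfNOD q (appendOne n n1 M D) * ((M + 1).choose 2 : ℝ) =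
      EfNOD (fun k => q k.castSucc) D * (M.choose 2 : ℝ)
        + ∑ k : Fin M, fNOD q (appendOne n n1 M D) k.castSucc (Fin.last M) := by
  simp only [EfNOD, div_mul_cancel₀ _ (cast_choose_two_ne_zero hM),
    div_mul_cancel₀ _ (cast_choose_two_ne_zero (by omega : 2 ≤ M + 1)),
    sum_pairs_lt_castSucc, fNOD_appendOne_castSucc]

lemma nuv_appendOne_last (k : Fin M) (u v : ℕ) :
    nuv (appendOne n n1 M D) k.castSucc (Fin.last M) u v =
      (univ.filter fun i : Fin n => D (Fin.castAdd n1 i) k = u ∧ 0 = v).card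
        + (univ.filter fun i : Fin n1 => D (Fin.natAdd n i) k = u ∧ 1 = v).card := by
  simp only [nuv, card_filter, Fin.sum_univ_add, appendOne_castSucc, appendOne_castAdd_last,
    appendOne_natAdd_last]

lemma fNOD_appendOne_last (q : Fin (M + 1) → ℕ) (hq : q (Fin.last M) = 2) (k : Fin M) :
    fNOD q (appendOne n n1 M D) k.castSucc (Fin.last M) =
      ∑ u ∈ range (q k.castSucc),
        (((univ.filter fun i : Fin n => D (Fin.castAdd n1 i) k = u).card
            - ((n : ℝ) + n1) / (2 * q k.castSucc)) ^ 2
          + ((univ.filter fun i : Fin n1 => D (Fin.natAdd n i) k = u).card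
            - ((n : ℝ) + n1) / (2 * q k.castSucc)) ^ 2) := by
  simp [fNOD, nuv_appendOne_last, hq, sum_range_succ, mul_comm]


lemma fNOD_appendOne_last_of_balanced (q : Fin (M + 1) → ℕ) (hq : q (Fin.last M) = 2)
    (k : Fin M) (hqk : q k.castSucc ≠ 0)
    (hinit : ∀ u < q k.castSucc,
      ((univ.filter fun i : Fin n => D (Fin.castAdd n1 i) k = u).card : ℝ) = n / q k.castSucc)
    (hfollow : ∀ u < q k.castSucc,
      ((univ.filter fun i : Fin n1 => D (Fin.natAdd n i) k = u).card : ℝ) = n1 / q k.castSucc) :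
    fNOD q (appendOne n n1 M D) k.castSucc (Fin.last M) =
      ((n : ℝ) - n1) ^ 2 / (2 * q k.castSucc) := by
  rw [fNOD_appendOne_last D q hq, sum_congr rfl fun u hu => by
    rw [hinit u (mem_range.1 hu), hfollow u (mem_range.1 hu)]]
  rw [sum_const, card_range, nsmul_eq_mul]
  field_simp
  ring

lemma fNOD_appendOne_last_of_zero_of_balanced (q : Fin (M + 1) → ℕ) (hq : q (Fin.last M) = 2)
    (k : Fin M) (hqk : q k.castSucc = 3) (hinit : ∀ i : Fin n, D (Fin.castAdd n1 i) k = 0)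
    (hfollow : ∀ i : Fin n1, D (Fin.natAdd n i) k = 1 ∨ D (Fin.natAdd n i) k = 2)
    (h1 : 2 * (univ.filter fun i : Fin n1 => D (Fin.natAdd n i) k = 1).card = n1)
    (h2 : 2 * (univ.filter fun i : Fin n1 => D (Fin.natAdd n i) k = 2).card = n1) :
    fNOD q (appendOne n n1 M D) k.castSucc (Fin.last M) =
      (n : ℝ) ^ 2 + (n1 : ℝ) ^ 2 / 2 - ((n : ℝ) + n1) ^ 2 / 6 := by
  have h0 : (univ.filter fun i : Fin n1 => D (Fin.natAdd n i) k = 0).card = 0 :=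
    card_eq_zero.2 <| filter_eq_empty_iff.2 fun i _ => by rcases hfollow i with h | h <;> omega
  have h1' : ((univ.filter fun i : Fin n1 => D (Fin.natAdd n i) k = 1).card : ℝ) = n1 / 2 := by
    rw [eq_div_iff two_ne_zero, mul_comm]; exact_mod_cast h1
  have h2' : ((univ.filter fun i : Fin n1 => D (Fin.natAdd n i) k = 2).card : ℝ) = n1 / 2 := by
    rw [eq_div_iff two_ne_zero, mul_comm]; exact_mod_cast h2
  rw [fNOD_appendOne_last D q hq, hqk]
  simp [sum_range_succ, hinit, h0, h1', h2']
  ring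

end Blocking

section Augmented

variable {n n1 m r : ℕ} (d0 : Fin n → Fin m → ℕ) (d1 : Fin n1 → Fin m → ℕ)
  (d2 : Fin n1 → Fin r → ℕ)

@[simp]
lemma augDesign_castAdd_castAdd (i : Fin n) (k : Fin m) :
    augDesign n n1 m r d0 d1 d2 (Fin.castAdd n1 i) (Fin.castAdd r k) = d0 i k := by
  simp [augDesign]

@[simp]
lemma augDesign_castAdd_natAdd (i : Fin n) (j : Fin r) :
    augDesign n n1 m r d0 d1 d2 (Fin.castAdd n1 i) (Fin.natAdd m j) = 0 := by
  simp [augDesign]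

@[simp]
lemma augDesign_natAdd_castAdd (i : Fin n1) (k : Fin m) :
    augDesign n n1 m r d0 d1 d2 (Fin.natAdd n i) (Fin.castAdd r k) = d1 i k := by
  simp [augDesign]

@[simp]
lemma augDesign_natAdd_natAdd (i : Fin n1) (j : Fin r) :
    augDesign n n1 m r d0 d1 d2 (Fin.natAdd n i) (Fin.natAdd m j) = d2 i j := by
  simp [augDesign]

end Augmented

lemma IsUType.card_filter_eq {N m1 m2 : ℕ} {d : Fin N → Fin (m1 + m2) → ℕ}
    (hd : IsUType N m1 m2 d) (r : ℕ) (k : Fin (m1 + m2)) {u : ℕ} (hu : u < qfun m1 m2 r k) :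
    ((univ.filter fun i => d i k = u).card : ℝ) = N / qfun m1 m2 r k := by
  have hk := k.isLt
  have hdk := hd k
  unfold qfun at hu ⊢
  split_ifs at hdk hu ⊢
  · rw [eq_div_iff (by norm_num), mul_comm]
    exact_mod_cast hdk.2 u hu
  · rw [eq_div_iff (by norm_num), mul_comm]
    exact_mod_cast hdk.2 u hu
  · omega

lemma qfun_pos (m1 m2 r k : ℕ) : 0 < qfun m1 m2 r k := by
  unfold qfun; split_ifs <;> norm_num

lemma sum_fNOD_appendOne_augDesign_last {n n1 m1 m2 r : ℕ}
    {d0 : Fin n → Fin (m1 + m2) → ℕ} {d1 : Fin n1 → Fin (m1 + m2) → ℕ}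
    {d2 : Fin n1 → Fin r → ℕ} (hd0 : IsUType n m1 m2 d0) (hd1 : IsUType n1 m1 m2 d1)
    (hd2 : IsBalanced n1 r d2) :
    ∑ k : Fin (m1 + m2 + r), fNOD (fun k : Fin (m1 + m2 + r + 1) => qfun m1 m2 r (k : ℕ))
        (appendOne n n1 (m1 + m2 + r) (augDesign n n1 (m1 + m2) r d0 d1 d2))
        k.castSucc (Fin.last (m1 + m2 + r)) = blockingNOD n n1 m1 m2 r := by
  set q := fun k : Fin (m1 + m2 + r + 1) => qfun m1 m2 r (k : ℕ)
  set D := augDesign n n1 (m1 + m2) r d0 d1 d2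
  have hq : q (Fin.last _) = 2 := by simp [q, qfun]
  have hold (k : Fin (m1 + m2)) := fNOD_appendOne_last_of_balanced D q hq (Fin.castAdd r k)
    (qfun_pos _ _ _ _).ne'
    (fun u hu => by simpa [q, D] using hd0.card_filter_eq r k (u := u) (by simpa [q] using hu))
    (fun u hu => by simpa [q, D] using hd1.card_filter_eq r k (u := u) (by simpa [q] using hu))
  have hnew (j : Fin r) := fNOD_appendOne_last_of_zero_of_balanced D q hq (Fin.natAdd (m1 + m2) j)
    (by simp [q, qfun]; omega) (by simp [D]) (by simpa [D] using hd2.1 · j)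
    (by simpa [D] using (hd2.2 j).1) (by simpa [D] using (hd2.2 j).2)
  have hq2 (k : Fin m1) : q (Fin.castAdd r (Fin.castAdd m2 k)).castSucc = 2 := by simp [q, qfun]
  have hq3 (k : Fin m2) : q (Fin.castAdd r (Fin.natAdd m1 k)).castSucc = 3 := by
    simp [q, qfun]; omega
  rw [Fin.sum_univ_add]
  simp only [hold, hnew, Fin.sum_univ_add, hq2, hq3]
  simp [blockingNOD]
  ring

lemma Q1pc_eq (n1 m1 m2 r : ℕ) :
    Q1pc n1 m1 m2 r = Q1c n1 m1 m2 r + (n1 : ℝ) * ((n1 : ℝ) - 1)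
      + (m1 : ℝ) * n1 * ((n1 : ℝ) - 2) + 2 * (m2 : ℝ) * n1 * ((n1 : ℝ) - 3) / 3
      + (r : ℝ) * n1 * ((n1 : ℝ) - 2) := by
  unfold Q1pc Q1c zeta1 eta1
  ring

lemma LBf3b_mul_choose (n n1 m1 m2 r : ℕ) (hm : 2 ≤ m1 + m2 + r) (ef0 : ℝ) :
    LBf3b n n1 m1 m2 r ef0 * ((m1 + m2 + r + 1).choose 2 : ℝ) =
      LBf3 n n1 m1 m2 r ef0 * ((m1 + m2 + r).choose 2 : ℝ) + blockingNOD n n1 m1 m2 r := by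
  have hM : (2 : ℝ) ≤ (m1 : ℝ) + m2 + r := by exact_mod_cast hm
  have h0 : (m1 : ℝ) + m2 + r ≠ 0 := by linarith
  have h1 : (m1 : ℝ) + m2 + r - 1 ≠ 0 := by linarith
  have h2 : (m1 : ℝ) + m2 + r + 1 ≠ 0 := by linarith
  simp only [Nat.cast_choose_two, LBf3, LBf3b, Q1pc_eq, blockingNOD]
  push_cast
  field_simp
  ring

theorem paper_stmt_14_general (n n1 m1 m2 r : ℕ)
    (hm : 2 ≤ m1 + m2)
    (d0 : Fin n → Fin (m1 + m2) → ℕ) (d1 : Fin n1 → Fin (m1 + m2) → ℕ)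
    (d2 : Fin n1 → Fin r → ℕ)
    (hd0 : IsUType n m1 m2 d0) (hd1 : IsUType n1 m1 m2 d1) (hd2 : IsBalanced n1 r d2) :
    EfNOD (fun k : Fin (m1 + m2 + r) => qfun m1 m2 r (k : ℕ)) (augDesign n n1 (m1 + m2) r d0 d1 d2) = LBf3 n n1 m1 m2 r (EfNOD (fun k : Fin (m1 + m2) => qfun m1 m2 0 (k : ℕ)) d0) ↔
      EfNOD (fun k : Fin (m1 + m2 + r + 1) => qfun m1 m2 r (k : ℕ)) (appendOne n n1 (m1 + m2 + r) (augDesign n n1 (m1 + m2) r d0 d1 d2)) = LBf3b n n1 m1 m2 r (EfNOD (fun k : Fin (m1 + m2) => qfun m1 m2 0 (k : ℕ)) d0) := by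
  have hM : 2 ≤ m1 + m2 + r := by omega
  conv_rhs => rw [← mul_left_inj' (cast_choose_two_ne_zero (by omega : 2 ≤ m1 + m2 + r + 1))]
  rw [EfNOD_appendOne_mul_choose _ hM,
    sum_fNOD_appendOne_augDesign_last hd0 hd1 hd2, LBf3b_mul_choose _ _ _ _ _ hM,
    add_left_inj, mul_left_inj' (cast_choose_two_ne_zero hM)]
  simp only [Fin.val_castSucc]

theorem paper_stmt_14 (n n1 m1 m2 r : ℕ) (hn : 1 ≤ n) (hn1 : 2 ≤ n1)
    (hm : 2 ≤ m1 + m2)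
    (d0 : Fin n → Fin (m1 + m2) → ℕ) (d1 : Fin n1 → Fin (m1 + m2) → ℕ)
    (d2 : Fin n1 → Fin r → ℕ)
    (hd0 : IsUType n m1 m2 d0) (hd1 : IsUType n1 m1 m2 d1) (hd2 : IsBalanced n1 r d2) :
    EfNOD (fun k : Fin (m1 + m2 + r) => qfun m1 m2 r (k : ℕ)) (augDesign n n1 (m1 + m2) r d0 d1 d2) = LBf3 n n1 m1 m2 r (EfNOD (fun k : Fin (m1 + m2) => qfun m1 m2 0 (k : ℕ)) d0) ↔
      EfNOD (fun k : Fin (m1 + m2 + r + 1) => qfun m1 m2 r (k : ℕ)) (appendOne n n1 (m1 + m2 + r) (augDesign n n1 (m1 + m2) r d0 d1 d2)) = LBf3b n n1 m1 m2 r (EfNOD (fun k : Fin (m1 + m2) => qfun m1 m2 0 (k : ℕ)) d0) :=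
  paper_stmt_14_general n n1 m1 m2 r hm d0 d1 d2 hd0 hd1 hd2

end CAUD

end
end

section
/- Let n, n1 ≥ 1, r ≥ 0, m1, m2 ≥ 0 with m+r ≥ 2 where m = m1+m2, let d0 ∈ U(n; 2^{m1} 3^{m2}), d1 ∈ U(n1; 2^{m1} 3^{m2}), let d2 be a column-balanced n1×r matrix with entries in {1,2}, and let D3 be the corresponding column augmented design. Then E(f_NOD)(D3) = (n+n1)(m+r)/(m+r−1) + [1/((m+r)(m+r−1))]·( Σ_{i≠j} λ_{ij}(D3)² − r·(n² + n1²/2) − (m1/2 + m2/3 + m1(m1−1)/4 + (m2+r)(m2+r−1)/9 + m1(m2+r)/3)·(n+n1)² ), where λ_{ij}(D3) is the number of columns of D3 (out of all m+r columns) in which rows i and j agree, and the sum runs over all ordered pairs of distinct rows i ≠ j of D3. -/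
open Finset

noncomputable section

namespace CAUD

/-!
Write `N = n + n1` and `M = m1 + m2 + r`. Since `n_{uv}^{kl}` is the size of a fibre of
`i ↦ (d i k, d i l)`, the sum `Σ_{u,v} (n_{uv}^{kl})²` counts the ordered pairs of rows that agree
in both columns `k` and `l`, and so `f_NOD^{kl} = #{(i, j) | rows i, j agree in k and l} - N²/(q_k q_l)`.
Summing this over `k ≠ l` and then summing over row pairs instead of column pairs gives
`Σ_{i,j} λ_ij² - Σ_{i,j} λ_ij - N² ((Σ_k 1/q_k)² - Σ_k 1/q_k²)`. The diagonal terms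
are `λ_ii = M`. The sum `Σ_{i,j} λ_ij` counts, column by column, the pairs of rows that agree.
Because the columns are balanced, this count is `N²/q` for a column of `(d0; d1)` and
`n² + n1²/2` for a column of `(0; d2)`.
-/

theorem sum_card_fiber_sq {α β : Type*} [Fintype α] [DecidableEq β] (φ : α → β) (s : Finset β)
    (hφ : ∀ a, φ a ∈ s) :
    ∑ b ∈ s, #{a | φ a = b} ^ 2 = #{p : α × α | φ p.1 = φ p.2} := by
  rw [card_eq_sum_card_fiberwise (f := fun p : α × α => φ p.1) (t := s) fun p _ => hφ p.1]
  refine sum_congr rfl fun b _ => ?_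
  rw [sq, ← card_product]
  congr 1
  ext ⟨a, a'⟩
  simp only [mem_filter, mem_univ, true_and, mem_product]
  grind

theorem sum_sum_card_filter_and {ι κ : Type*} [Fintype ι] [Fintype κ] (A : κ → ι → Prop)
    [∀ k x, Decidable (A k x)] :
    ∑ k, ∑ l, #{x | A k x ∧ A l x} = ∑ x, #{k | A k x} ^ 2 := by
  simp only [card_filter, sq, sum_mul_sum, ite_zero_mul_ite_zero, mul_one]
  exact (sum_congr rfl fun k _ => sum_comm).trans sum_comm

theorem sum_card_filter_comm {ι κ : Type*} [Fintype ι] [Fintype κ] (A : κ → ι → Prop)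
    [∀ k x, Decidable (A k x)] :
    ∑ k, #{x | A k x} = ∑ x, #{k | A k x} := by
  simp only [card_filter]
  exact sum_comm

theorem card_filter_fin_add {n n1 : ℕ} (P : Fin (n + n1) → Prop) [DecidablePred P] :
    #{i | P i} = #{i : Fin n | P (Fin.castAdd n1 i)} + #{i : Fin n1 | P (Fin.natAdd n i)} := by
  simp only [card_filter]
  exact Fin.sum_univ_add _

theorem sum_sq_sub_const {α : Type*} (s : Finset α) (x : α → ℝ) (c : ℝ) :
    ∑ a ∈ s, (x a - c) ^ 2 = ∑ a ∈ s, x a ^ 2 - 2 * (∑ a ∈ s, x a) * c + #s * c ^ 2 := by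
  simp only [sub_sq, sum_add_distrib, sum_sub_distrib, sum_const, nsmul_eq_mul, mul_sum, sum_mul]

theorem sum_sum_div_mul {κ : Type*} [Fintype κ] (c : ℝ) (a : κ → ℝ) :
    ∑ k, ∑ l, c / (a k * a l) = c * (∑ k, (a k)⁻¹) ^ 2 := by
  rw [sq, sum_mul_sum, mul_sum]
  simp only [mul_sum, div_eq_mul_inv, mul_inv]

theorem sum_sum_ite_ne {ι : Type*} [Fintype ι] [DecidableEq ι] (G : ι → ι → ℝ) :
    ∑ i, ∑ j, (if i ≠ j then G i j else 0) = ∑ i, ∑ j, G i j - ∑ i, G i i := by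
  rw [← sum_sub_distrib]
  refine sum_congr rfl fun i _ => ?_
  rw [← sum_erase_eq_sub (mem_univ i), ← sum_filter, filter_ne]

theorem two_mul_sum_sum_ite_lt {ι : Type*} [Fintype ι] [LinearOrder ι] (F : ι → ι → ℝ)
    (hF : ∀ k l, F k l = F l k) :
    2 * ∑ k, ∑ l, (if k < l then F k l else 0) = ∑ k, ∑ l, F k l - ∑ k, F k k := by
  have hswap : ∑ k, ∑ l, (if k < l then F k l else 0)
      = ∑ k, ∑ l, (if l < k then F k l else 0) := by
    rw [sum_comm]; simp only [hF]
  rw [← sum_sum_ite_ne, two_mul]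
  nth_rw 2 [hswap]
  rw [← sum_add_distrib]
  refine sum_congr rfl fun k _ => ?_
  rw [← sum_add_distrib]
  refine sum_congr rfl fun l _ => ?_
  rcases lt_trichotomy k l with h | rfl | h
  · simp [h, h.ne, h.not_gt]
  · simp
  · simp [h, h.ne', h.not_gt]

theorem sum_fin_three_blocks {a b c : ℕ} (A B C : ℝ) :
    ∑ k : Fin (a + b + c), (if (k : ℕ) < a then A else if (k : ℕ) < a + b then B else C)
      = a * A + b * B + c * C := by
  simp [Fin.sum_univ_add, add_assoc]

theorem sum_range_sq_add_of_balanced {Q a b : ℕ} (c0 c1 : ℕ → ℕ) (h0 : ∀ u < Q, Q * c0 u = a)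
    (h1 : ∀ u < Q, Q * c1 u = b) :
    ∑ u ∈ range Q, (((c0 u + c1 u) ^ 2 : ℕ) : ℝ) = ((a : ℝ) + b) ^ 2 / Q := by
  rcases Nat.eq_zero_or_pos Q with rfl | hQ
  · simp
  have hQ' : (Q : ℝ) ≠ 0 := by positivity
  have hterm : ∀ u ∈ range Q, (((c0 u + c1 u) ^ 2 : ℕ) : ℝ) = (((a : ℝ) + b) / Q) ^ 2 := by
    intro u hu
    have hsum : (Q : ℝ) * (c0 u + c1 u) = a + b := by
      rw [mul_add]
      exact_mod_cast congrArg₂ (· + ·) (h0 u (mem_range.1 hu)) (h1 u (mem_range.1 hu))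
    rw [Nat.cast_pow, Nat.cast_add, ← hsum]
    field_simp
  rw [sum_congr rfl hterm, sum_const, card_range, nsmul_eq_mul]
  field_simp

section Design

variable {N M : ℕ} (q : Fin M → ℕ) (d : Fin N → Fin M → ℕ)

theorem nuv_eq_card_fiber (k l : Fin M) (u v : ℕ) :
    nuv d k l u v = #{i | (d i k, d i l) = (u, v)} := by
  simp only [nuv, Prod.mk.injEq]

theorem fNOD_eq (hd : ∀ i k, d i k < q k) (k l : Fin M) :
    fNOD q d k l = (#{p : Fin N × Fin N | d p.1 k = d p.2 k ∧ d p.1 l = d p.2 l} : ℝ)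
      - (N : ℝ) ^ 2 / (q k * q l) := by
  have hmem : ∀ i, (d i k, d i l) ∈ range (q k) ×ˢ range (q l) := fun i => by
    simp [hd i k, hd i l]
  have hsq := sum_card_fiber_sq (fun i => (d i k, d i l)) _ hmem
  have htot := card_eq_sum_card_fiberwise (s := univ) fun i _ => hmem i
  simp only [Prod.mk.injEq, card_univ, Fintype.card_fin] at hsq htot
  rw [fNOD, ← sum_product', sum_sq_sub_const]
  simp only [nuv_eq_card_fiber, Prod.mk.eta]
  rw [← Nat.cast_sum, ← htot]
  simp only [← Nat.cast_pow, ← Nat.cast_sum, hsq, card_product, card_range, Nat.cast_mul]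
  push_cast
  -- `x / 0 = 0` makes this hold also when a column has no levels.
  rcases eq_or_ne ((q k : ℝ) * q l) 0 with h | h
  · simp [h]
  · field_simp
    ring

theorem sum_sum_lam_sq :
    ∑ i, ∑ j, (lam d i j : ℝ) ^ 2
      = ∑ k, ∑ l, (#{p : Fin N × Fin N | d p.1 k = d p.2 k ∧ d p.1 l = d p.2 l} : ℝ) := by
  simp only [← Nat.cast_pow, ← Nat.cast_sum, sum_sum_card_filter_and, lam, Fintype.sum_prod_type]

theorem sum_sum_lam :
    ∑ i, ∑ j, (lam d i j : ℝ) = ∑ k, (#{p : Fin N × Fin N | d p.1 k = d p.2 k} : ℝ) := by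
  rw [← Nat.cast_sum, sum_card_filter_comm]
  simp only [lam, Fintype.sum_prod_type, Nat.cast_sum]

theorem lam_self (i : Fin N) : lam d i i = M := by
  simp [lam]

theorem two_mul_sum_fNOD (hd : ∀ i k, d i k < q k) :
    2 * ∑ k : Fin M, ∑ l : Fin M, (if (k : ℕ) < l then fNOD q d k l else 0)
      = ∑ i, ∑ j, (lam d i j : ℝ) ^ 2 - ∑ i, ∑ j, (lam d i j : ℝ)
        - (N : ℝ) ^ 2 * ((∑ k, (q k : ℝ)⁻¹) ^ 2 - ∑ k, ((q k : ℝ)⁻¹) ^ 2) := by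
  have hsymm : ∀ k l, fNOD q d k l = fNOD q d l k := fun k l => by
    simp only [fNOD_eq q d hd, and_comm, mul_comm]
  simp only [Fin.val_fin_lt]
  rw [two_mul_sum_sum_ite_lt _ hsymm]
  simp only [fNOD_eq q d hd, and_self, sum_sub_distrib, sum_sum_lam_sq, sum_sum_lam,
    sum_sum_div_mul]
  rw [mul_sub, mul_sum]
  simp only [div_eq_mul_inv, mul_inv, sq]
  ring

end Design

theorem qfun_of_lt {m1 m2 r k : ℕ} (hk : k < m1 + m2 + r) :
    qfun m1 m2 r k = if k < m1 then 2 else 3 := by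
  simp [qfun, hk]

theorem sum_qfun (m1 m2 r : ℕ) (g : ℕ → ℝ) :
    ∑ k : Fin (m1 + m2 + r), g (qfun m1 m2 r k) = m1 * g 2 + (m2 + r) * g 3 := by
  have hg : ∀ k : Fin (m1 + m2 + r),
      g (qfun m1 m2 r k) = if (k : ℕ) < m1 then g 2 else if (k : ℕ) < m1 + m2 then g 3 else g 3 :=
    fun k => by rw [qfun_of_lt k.isLt]; split_ifs <;> rfl
  rw [sum_congr rfl fun k _ => hg k, sum_fin_three_blocks]
  ring

theorem IsUType.column {N m1 m2 : ℕ} {d : Fin N → Fin (m1 + m2) → ℕ} (hd : IsUType N m1 m2 d)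
    (k : Fin (m1 + m2)) :
    (∀ i, d i k < if (k : ℕ) < m1 then 2 else 3) ∧
      ∀ u < (if (k : ℕ) < m1 then 2 else 3),
        (if (k : ℕ) < m1 then 2 else 3) * #{i | d i k = u} = N := by
  have := hd k
  split_ifs at this ⊢ <;> exact this

section Augmented

variable {n n1 m r : ℕ} (d0 : Fin n → Fin m → ℕ) (d1 : Fin n1 → Fin m → ℕ)
  (d2 : Fin n1 → Fin r → ℕ)

theorem augDesign_castAdd (i : Fin n) (k : Fin (m + r)) :
    augDesign n n1 m r d0 d1 d2 (Fin.castAdd n1 i) k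
      = if hk : (k : ℕ) < m then d0 i ⟨k, hk⟩ else 0 := by
  simp [augDesign]

theorem augDesign_natAdd (i : Fin n1) (k : Fin (m + r)) :
    augDesign n n1 m r d0 d1 d2 (Fin.natAdd n i) k
      = if hk : (k : ℕ) < m then d1 i ⟨k, hk⟩ else d2 i ⟨k - m, by omega⟩ := by
  simp [augDesign]

end Augmented

section MixedLevel

variable {n n1 m1 m2 r : ℕ} {d0 : Fin n → Fin (m1 + m2) → ℕ} {d1 : Fin n1 → Fin (m1 + m2) → ℕ}
  {d2 : Fin n1 → Fin r → ℕ}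

theorem augDesign_lt_qfun (hd0 : IsUType n m1 m2 d0) (hd1 : IsUType n1 m1 m2 d1)
    (hd2 : IsBalanced n1 r d2) (i : Fin (n + n1)) (k : Fin (m1 + m2 + r)) :
    augDesign n n1 (m1 + m2) r d0 d1 d2 i k < qfun m1 m2 r k := by
  rw [qfun_of_lt k.isLt]
  induction i using Fin.addCases with
  | left i =>
    rw [augDesign_castAdd]
    by_cases hk : (k : ℕ) < m1 + m2
    · rw [dif_pos hk]; exact (hd0.column ⟨k, hk⟩).1 i
    · rw [dif_neg hk]; split_ifs <;> norm_num
  | right i =>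
    rw [augDesign_natAdd]
    by_cases hk : (k : ℕ) < m1 + m2
    · rw [dif_pos hk]; exact (hd1.column ⟨k, hk⟩).1 i
    · rw [dif_neg hk, if_neg (by omega)]
      rcases hd2.1 i ⟨k - (m1 + m2), by omega⟩ with h | h <;> rw [h] <;> norm_num

theorem card_pairs_augDesign (hd0 : IsUType n m1 m2 d0) (hd1 : IsUType n1 m1 m2 d1)
    (hd2 : IsBalanced n1 r d2) (k : Fin (m1 + m2 + r)) :
    (#{p : Fin (n + n1) × Fin (n + n1) | augDesign n n1 (m1 + m2) r d0 d1 d2 p.1 k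
        = augDesign n n1 (m1 + m2) r d0 d1 d2 p.2 k} : ℝ)
      = if (k : ℕ) < m1 then ((n : ℝ) + n1) ^ 2 / 2
        else if (k : ℕ) < m1 + m2 then ((n : ℝ) + n1) ^ 2 / 3
        else (n : ℝ) ^ 2 + (n1 : ℝ) ^ 2 / 2 := by
  rw [← sum_card_fiber_sq _ (range (qfun m1 m2 r k))
    fun i => mem_range.2 (augDesign_lt_qfun hd0 hd1 hd2 i k), Nat.cast_sum]
  simp only [card_filter_fin_add, augDesign_castAdd, augDesign_natAdd]
  by_cases hk : (k : ℕ) < m1 + m2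
  · simp only [dif_pos hk]
    have h0 := (hd0.column ⟨k, hk⟩).2
    have h1 := (hd1.column ⟨k, hk⟩).2
    simp only at h0 h1
    rw [qfun_of_lt k.isLt, sum_range_sq_add_of_balanced _ _ h0 h1]
    split_ifs <;> push_cast <;> rfl
  · simp only [dif_neg hk]
    set j : Fin r := ⟨k - (m1 + m2), by omega⟩
    have hzero : #{i | d2 i j = 0} = 0 := by
      simp only [card_eq_zero, filter_eq_empty_iff]
      intro i _
      rcases hd2.1 i j with h | h <;> omega
    have hhalf : ∀ u, 2 * #{i | d2 i j = u} = n1 → (#{i | d2 i j = u} : ℝ) = n1 / 2 := by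
      intro u h
      have h' : 2 * (#{i | d2 i j = u} : ℝ) = n1 := by exact_mod_cast h
      linarith
    rw [qfun_of_lt k.isLt, if_neg (by omega), if_neg (by omega), if_neg hk]
    simp only [sum_range_succ, range_one, sum_singleton, filter_const, ↓reduceIte, card_univ,
      Fintype.card_fin, card_empty, hzero, hhalf 1 (hd2.2 j).1, hhalf 2 (hd2.2 j).2,
      zero_ne_one, OfNat.zero_ne_ofNat, Nat.cast_pow, Nat.cast_add, CharP.cast_eq_zero, add_zero,
      zero_add]
    ring

theorem sum_sum_lam_augDesign (hd0 : IsUType n m1 m2 d0) (hd1 : IsUType n1 m1 m2 d1)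
    (hd2 : IsBalanced n1 r d2) :
    ∑ i, ∑ j, (lam (augDesign n n1 (m1 + m2) r d0 d1 d2) i j : ℝ)
      = ((n : ℝ) + n1) ^ 2 * ((m1 : ℝ) / 2 + (m2 : ℝ) / 3)
        + r * ((n : ℝ) ^ 2 + (n1 : ℝ) ^ 2 / 2) := by
  rw [sum_sum_lam, sum_congr rfl fun k _ => card_pairs_augDesign hd0 hd1 hd2 k,
    sum_fin_three_blocks]
  ring

end MixedLevel

theorem paper_stmt_19_general (n n1 m1 m2 r : ℕ)
    (hmr : 2 ≤ m1 + m2 + r)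
    (d0 : Fin n → Fin (m1 + m2) → ℕ) (d1 : Fin n1 → Fin (m1 + m2) → ℕ)
    (d2 : Fin n1 → Fin r → ℕ)
    (hd0 : IsUType n m1 m2 d0) (hd1 : IsUType n1 m1 m2 d1) (hd2 : IsBalanced n1 r d2) :
    EfNOD (fun k : Fin (m1 + m2 + r) => qfun m1 m2 r (k : ℕ)) (augDesign n n1 (m1 + m2) r d0 d1 d2) =
      ((n : ℝ) + n1) * ((m1 : ℝ) + m2 + r) / ((m1 : ℝ) + m2 + r - 1)
      + 1 / (((m1 : ℝ) + m2 + r) * ((m1 : ℝ) + m2 + r - 1)) *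
        ((∑ i : Fin (n + n1), ∑ j : Fin (n + n1),
            if i ≠ j then ((lam (augDesign n n1 (m1 + m2) r d0 d1 d2) i j : ℕ) : ℝ) ^ 2 else 0)
          - (r : ℝ) * ((n : ℝ) ^ 2 + (n1 : ℝ) ^ 2 / 2)
          - ((m1 : ℝ) / 2 + (m2 : ℝ) / 3 + (m1 : ℝ) * ((m1 : ℝ) - 1) / 4
              + ((m2 : ℝ) + r) * ((m2 : ℝ) + r - 1) / 9 + (m1 : ℝ) * ((m2 : ℝ) + r) / 3)
            * ((n : ℝ) + n1) ^ 2) := by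
  set D := augDesign n n1 (m1 + m2) r d0 d1 d2
  have h2X := two_mul_sum_fNOD _ D (augDesign_lt_qfun hd0 hd1 hd2)
  have hinv : ∑ k : Fin (m1 + m2 + r), (qfun m1 m2 r k : ℝ)⁻¹ = m1 * 2⁻¹ + (m2 + r) * 3⁻¹ :=
    sum_qfun m1 m2 r fun x => (x : ℝ)⁻¹
  have hinv_sq : ∑ k : Fin (m1 + m2 + r), ((qfun m1 m2 r k : ℝ)⁻¹) ^ 2
      = m1 * (2⁻¹) ^ 2 + (m2 + r) * (3⁻¹) ^ 2 :=
    sum_qfun m1 m2 r fun x => ((x : ℝ)⁻¹) ^ 2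
  have hdiag : ∑ i, ∑ j, (lam D i j : ℝ) ^ 2
      = (∑ i, ∑ j, if i ≠ j then (lam D i j : ℝ) ^ 2 else 0) + (n + n1) * (m1 + m2 + r) ^ 2 := by
    rw [sum_sum_ite_ne]
    simp only [lam_self, sum_const, card_univ, Fintype.card_fin, nsmul_eq_mul]
    push_cast
    ring
  rw [hdiag, sum_sum_lam_augDesign hd0 hd1 hd2, hinv, hinv_sq] at h2X
  have hM : (2 : ℝ) ≤ m1 + m2 + r := by exact_mod_cast hmr
  have hM1 : (m1 + m2 + r : ℝ) - 1 ≠ 0 := (by linarith : (0 : ℝ) < _).ne'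
  rw [EfNOD, Nat.cast_choose_two]
  push_cast at h2X ⊢
  field_simp
  linear_combination 216 * h2X

theorem paper_stmt_19 (n n1 m1 m2 r : ℕ) (hn : 1 ≤ n) (hn1 : 1 ≤ n1)
    (hmr : 2 ≤ m1 + m2 + r)
    (d0 : Fin n → Fin (m1 + m2) → ℕ) (d1 : Fin n1 → Fin (m1 + m2) → ℕ)
    (d2 : Fin n1 → Fin r → ℕ)
    (hd0 : IsUType n m1 m2 d0) (hd1 : IsUType n1 m1 m2 d1) (hd2 : IsBalanced n1 r d2) :
    EfNOD (fun k : Fin (m1 + m2 + r) => qfun m1 m2 r (k : ℕ)) (augDesign n n1 (m1 + m2) r d0 d1 d2) =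
      ((n : ℝ) + n1) * ((m1 : ℝ) + m2 + r) / ((m1 : ℝ) + m2 + r - 1)
      + 1 / (((m1 : ℝ) + m2 + r) * ((m1 : ℝ) + m2 + r - 1)) *
        ((∑ i : Fin (n + n1), ∑ j : Fin (n + n1),
            if i ≠ j then ((lam (augDesign n n1 (m1 + m2) r d0 d1 d2) i j : ℕ) : ℝ) ^ 2 else 0)
          - (r : ℝ) * ((n : ℝ) ^ 2 + (n1 : ℝ) ^ 2 / 2)
          - ((m1 : ℝ) / 2 + (m2 : ℝ) / 3 + (m1 : ℝ) * ((m1 : ℝ) - 1) / 4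
              + ((m2 : ℝ) + r) * ((m2 : ℝ) + r - 1) / 9 + (m1 : ℝ) * ((m2 : ℝ) + r) / 3)
            * ((n : ℝ) + n1) ^ 2) :=
  paper_stmt_19_general n n1 m1 m2 r hmr d0 d1 d2 hd0 hd1 hd2

end CAUD

end
end
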